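/- Suppose γ lies on a sphere: there exist c ∈ ℝ³ and R > 0 with ‖γ(s) − c‖ = R for all s ∈ I, and fix 0 ∈ I. Then there exists a constant θ₀ such that 1/κ(s) = R·cos(∫₀ˢ τ(u)du + θ₀) for all s ∈ I. -/

import Mathlib

/-!
Put `p = γ - c`. Differentiating `‖p‖² = R²` gives `⟪p, T⟫ = 0`, and differentiating that gives
`κ ⟪p, N⟫ = -1`. By Frenet–Serret, `g = ⟪p, N⟫` and `h = ⟪p, B⟫` satisfy `g' = τ h`, `h' = -τ g`,
so the pair `(g, h)` rotates through the angle `∫₀ˢ τ`. As `p ⊥ T`, `g² + h² = ‖p‖² = R²`, and `θ₀` is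
the polar angle of `(-g 0, h 0)`.
-/

open scoped RealInnerProductSpace

noncomputable def cross3 (x y : EuclideanSpace ℝ (Fin 3)) : EuclideanSpace ℝ (Fin 3) :=
  WithLp.toLp 2 ![x 1 * y 2 - x 2 * y 1, x 2 * y 0 - x 0 * y 2, x 0 * y 1 - x 1 * y 0]

open Set Real

section Orthonormal

variable {E ι : Type*} [NormedAddCommGroup E] [InnerProductSpace ℝ E]

theorem Orthonormal.sum_sq_inner_eq_norm_sq [FiniteDimensional ℝ E] [Fintype ι] [Nonempty ι]
    {v : ι → E} (hv : Orthonormal ℝ v) (hcard : Fintype.card ι = Module.finrank ℝ E) (x : E) :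
    ∑ i, ⟪x, v i⟫ ^ 2 = ‖x‖ ^ 2 := by
  let b := (basisOfOrthonormalOfCardEqFinrank hv hcard).toOrthonormalBasis (by simpa using hv)
  have hb : ⇑b = v := by simp [b]
  rw [← b.sum_sq_inner_left, hb]

theorem orthonormal_vecCons_three {u v w : E} (hu : ‖u‖ = 1) (hv : ‖v‖ = 1) (hw : ‖w‖ = 1)
    (huv : ⟪u, v⟫ = 0) (huw : ⟪u, w⟫ = 0) (hvw : ⟪v, w⟫ = 0) : Orthonormal ℝ ![u, v, w] := by
  refine ⟨fun i => by fin_cases i <;> simpa, fun i j hij => ?_⟩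
  fin_cases i <;> fin_cases j <;> simp_all [real_inner_comm]

end Orthonormal

section Calculus

theorem HasDerivAt.eq_zero_of_eqOn_const {F : Type*} [NormedAddCommGroup F] [NormedSpace ℝ F]
    {f : ℝ → F} {f' C : F} {U : Set ℝ} {s : ℝ} (hf : HasDerivAt f f' s) (hU : IsOpen U)
    (hs : s ∈ U) (hC : EqOn f (fun _ => C) U) : f' = 0 :=
  hf.unique ((hasDerivAt_const s C).congr_of_eventuallyEq (hC.eventuallyEq_of_mem (hU.mem_nhds hs)))

theorem IsOpen.eq_of_hasDerivAt_eq_zero {U : Set ℝ} (hU : IsOpen U) (hU' : IsPreconnected U)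
    {f : ℝ → ℝ} (hf : ∀ s ∈ U, HasDerivAt f 0 s) {x y : ℝ} (hx : x ∈ U) (hy : y ∈ U) :
    f x = f y :=
  hU.is_const_of_deriv_eq_zero hU' (fun s hs => (hf s hs).differentiableAt.differentiableWithinAt)
    (fun s hs => (hf s hs).deriv) hx hy

theorem hasDerivAt_integral_of_continuousOn {E : Type*} [NormedAddCommGroup E]
    [NormedSpace ℝ E] [CompleteSpace E] {f : ℝ → E} {U : Set ℝ} (hU : IsOpen U)
    [hU' : U.OrdConnected] (hf : ContinuousOn f U) {a s : ℝ} (ha : a ∈ U) (hs : s ∈ U) :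
    HasDerivAt (fun x => ∫ t in a..x, f t) (f s) s :=
  intervalIntegral.integral_hasDerivAt_right
    (hf.mono (hU'.uIcc_subset ha hs)).intervalIntegrable
    (hf.stronglyMeasurableAtFilter hU s hs) (hf.continuousAt (hU.mem_nhds hs))

theorem eq_mul_cos_add_mul_sin_of_hasDerivAt {U : Set ℝ} (hU : IsOpen U) (hU' : IsPreconnected U)
    {g h Θ τ : ℝ → ℝ} (hg : ∀ s ∈ U, HasDerivAt g (τ s * h s) s)
    (hh : ∀ s ∈ U, HasDerivAt h (-(τ s * g s)) s) (hΘ : ∀ s ∈ U, HasDerivAt Θ (τ s) s)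
    {s₀ s : ℝ} (hs₀ : s₀ ∈ U) (hs : s ∈ U) :
    g s = g s₀ * cos (Θ s - Θ s₀) + h s₀ * sin (Θ s - Θ s₀) := by
  have hcos u (hu : u ∈ U) : HasDerivAt (fun x => cos (Θ x)) (-sin (Θ u) * τ u) u :=
    (hasDerivAt_cos (Θ u)).comp u (hΘ u hu)
  have hsin u (hu : u ∈ U) : HasDerivAt (fun x => sin (Θ x)) (cos (Θ u) * τ u) u :=
    (hasDerivAt_sin (Θ u)).comp u (hΘ u hu)
  have hF : (fun x => g x * cos (Θ x) - h x * sin (Θ x)) s =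
      (fun x => g x * cos (Θ x) - h x * sin (Θ x)) s₀ :=
    hU.eq_of_hasDerivAt_eq_zero hU' (fun u hu =>
      (((hg u hu).mul (hcos u hu)).sub ((hh u hu).mul (hsin u hu))).congr_deriv (by ring)) hs hs₀
  have hG : (fun x => g x * sin (Θ x) + h x * cos (Θ x)) s =
      (fun x => g x * sin (Θ x) + h x * cos (Θ x)) s₀ :=
    hU.eq_of_hasDerivAt_eq_zero hU' (fun u hu =>
      (((hg u hu).mul (hsin u hu)).add ((hh u hu).mul (hcos u hu))).congr_deriv (by ring)) hs hs₀
  rw [cos_sub, sin_sub]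
  linear_combination cos (Θ s) * hF + sin (Θ s) * hG - g s * sin_sq_add_cos_sq (Θ s)

end Calculus

theorem exists_eq_mul_cos_and_eq_mul_sin {x y r : ℝ} (hr : 0 ≤ r) (h : x ^ 2 + y ^ 2 = r ^ 2) :
    ∃ θ, x = r * cos θ ∧ y = r * sin θ := by
  let z : ℂ := ⟨x, y⟩
  have hz : ‖z‖ = r := by
    rw [Complex.norm_def, Complex.normSq_mk, ← sq, ← sq, h, Real.sqrt_sq hr]
  exact ⟨z.arg, by rw [← hz, Complex.norm_mul_cos_arg], by rw [← hz, Complex.norm_mul_sin_arg]⟩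

section SphericalCurve

variable {E : Type*} [NormedAddCommGroup E] [InnerProductSpace ℝ E] {U : Set ℝ}
  {p T N B : ℝ → E} {κ τ : ℝ → ℝ} {s : ℝ}

theorem inner_tangent_eq_zero_of_norm_eq (hU : IsOpen U) (hp : ∀ s ∈ U, HasDerivAt p (T s) s)
    {R : ℝ} (hR : ∀ s ∈ U, ‖p s‖ = R) (hs : s ∈ U) : ⟪p s, T s⟫ = 0 := by
  have := (hp s hs).norm_sq.eq_zero_of_eqOn_const hU hs (C := R ^ 2) fun u hu => by
    simp [hR u hu]
  simpa using this

theorem curvature_mul_inner_normal_eq_neg_one (hU : IsOpen U)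
    (hp : ∀ s ∈ U, HasDerivAt p (T s) s) (hT1 : ∀ s ∈ U, ‖T s‖ = 1)
    (hTder : ∀ s ∈ U, HasDerivAt T (κ s • N s) s) (hpT : ∀ s ∈ U, ⟪p s, T s⟫ = 0)
    (hs : s ∈ U) : κ s * ⟪p s, N s⟫ = -1 := by
  have := ((hp s hs).inner ℝ (hTder s hs)).eq_zero_of_eqOn_const hU hs (C := 0) hpT
  rw [real_inner_smul_right, real_inner_self_eq_norm_sq, hT1 s hs] at this
  linarith

theorem hasDerivAt_inner_normal (hp : HasDerivAt p (T s) s)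
    (hN : HasDerivAt N ((-κ s) • T s + τ s • B s) s) (hpT : ⟪p s, T s⟫ = 0)
    (hTN : ⟪T s, N s⟫ = 0) : HasDerivAt (fun u => ⟪p u, N u⟫) (τ s * ⟪p s, B s⟫) s := by
  refine (hp.inner ℝ hN).congr_deriv ?_
  rw [inner_add_right, real_inner_smul_right, real_inner_smul_right, hpT, hTN]
  ring

theorem hasDerivAt_inner_binormal (hp : HasDerivAt p (T s) s)
    (hB : HasDerivAt B ((-τ s) • N s) s) (hTB : ⟪T s, B s⟫ = 0) :
    HasDerivAt (fun u => ⟪p u, B u⟫) (-(τ s * ⟪p s, N s⟫)) s := by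
  refine (hp.inner ℝ hB).congr_deriv ?_
  rw [real_inner_smul_right, hTB]
  ring

end SphericalCurve

theorem stmt_13_general (a b : ℝ) (γ T N B : ℝ → EuclideanSpace ℝ (Fin 3)) (κ τ : ℝ → ℝ)
    (hγT : ∀ s ∈ Set.Ioo a b, HasDerivAt γ (T s) s)
    (hT1 : ∀ s ∈ Set.Ioo a b, ‖T s‖ = 1)
    (hN1 : ∀ s ∈ Set.Ioo a b, ‖N s‖ = 1)
    (hB1 : ∀ s ∈ Set.Ioo a b, ‖B s‖ = 1)
    (hTN : ∀ s ∈ Set.Ioo a b, ⟪T s, N s⟫ = 0)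
    (hTB : ∀ s ∈ Set.Ioo a b, ⟪T s, B s⟫ = 0)
    (hNB : ∀ s ∈ Set.Ioo a b, ⟪N s, B s⟫ = 0)
    (hκpos : ∀ s ∈ Set.Ioo a b, 0 < κ s)
    (hTder : ∀ s ∈ Set.Ioo a b, HasDerivAt T (κ s • N s) s)
    (hNder : ∀ s ∈ Set.Ioo a b, HasDerivAt N ((-κ s) • T s + τ s • B s) s)
    (hBder : ∀ s ∈ Set.Ioo a b, HasDerivAt B ((-τ s) • N s) s)
    (h0 : (0:ℝ) ∈ Set.Ioo a b) (hτcont : ContinuousOn τ (Set.Ioo a b))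
    (c : EuclideanSpace ℝ (Fin 3)) (R : ℝ)
    (hsph : ∀ s ∈ Set.Ioo a b, ‖γ s - c‖ = R) :
    ∃ θ₀ : ℝ, ∀ s ∈ Set.Ioo a b,
      1 / κ s = R * Real.cos ((∫ t in (0:ℝ)..s, τ t) + θ₀) := by
  have hU : IsOpen (Ioo a b) := isOpen_Ioo
  set p := fun s => γ s - c
  have hp s (hs : s ∈ Ioo a b) : HasDerivAt p (T s) s := (hγT s hs).sub_const c
  have hpT s (hs : s ∈ Ioo a b) := inner_tangent_eq_zero_of_norm_eq hU hp hsph hs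
  set g := fun u => ⟪p u, N u⟫
  set h := fun u => ⟪p u, B u⟫
  have hrot s (hs : s ∈ Ioo a b) :
      g s = g 0 * cos (∫ t in (0:ℝ)..s, τ t) + h 0 * sin (∫ t in (0:ℝ)..s, τ t) := by
    simpa using eq_mul_cos_add_mul_sin_of_hasDerivAt hU isPreconnected_Ioo
      (fun u hu => hasDerivAt_inner_normal (hp u hu) (hNder u hu) (hpT u hu) (hTN u hu))
      (fun u hu => hasDerivAt_inner_binormal (hp u hu) (hBder u hu) (hTB u hu))
      (fun u hu => hasDerivAt_integral_of_continuousOn hU hτcont h0 hu) h0 hs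
  have hgh : (-g 0) ^ 2 + h 0 ^ 2 = R ^ 2 := by
    have := (orthonormal_vecCons_three (hT1 0 h0) (hN1 0 h0) (hB1 0 h0) (hTN 0 h0) (hTB 0 h0)
      (hNB 0 h0)).sum_sq_inner_eq_norm_sq (by simp) (p 0)
    have hR : ‖p 0‖ = R := hsph 0 h0
    simpa [Fin.sum_univ_three, hpT 0 h0, hR] using this
  obtain ⟨θ₀, hcos, hsin⟩ := exists_eq_mul_cos_and_eq_mul_sin (hsph 0 h0 ▸ norm_nonneg _) hgh
  refine ⟨θ₀, fun s hs => ?_⟩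
  have hg : 1 / κ s = -g s := by
    have := curvature_mul_inner_normal_eq_neg_one hU hp hT1 hTder hpT hs
    field_simp [(hκpos s hs).ne']
    linarith
  rw [hg, hrot s hs, cos_add]
  linear_combination cos (∫ t in (0:ℝ)..s, τ t) * hcos - sin (∫ t in (0:ℝ)..s, τ t) * hsin

/-- If γ lies on a sphere of center c and radius R > 0, then there is a
constant θ₀ with 1/κ(s) = R·cos(∫₀ˢ τ + θ₀) for all s ∈ I. -/
theorem stmt_13 (a b : ℝ) (γ T N B : ℝ → EuclideanSpace ℝ (Fin 3)) (κ τ : ℝ → ℝ)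
    (hγT : ∀ s ∈ Set.Ioo a b, HasDerivAt γ (T s) s)
    (hT1 : ∀ s ∈ Set.Ioo a b, ‖T s‖ = 1)
    (hN1 : ∀ s ∈ Set.Ioo a b, ‖N s‖ = 1)
    (hB1 : ∀ s ∈ Set.Ioo a b, ‖B s‖ = 1)
    (hTN : ∀ s ∈ Set.Ioo a b, ⟪T s, N s⟫ = 0)
    (hTB : ∀ s ∈ Set.Ioo a b, ⟪T s, B s⟫ = 0)
    (hNB : ∀ s ∈ Set.Ioo a b, ⟪N s, B s⟫ = 0)
    (horient : ∀ s ∈ Set.Ioo a b, B s = cross3 (T s) (N s))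
    (hκpos : ∀ s ∈ Set.Ioo a b, 0 < κ s)
    (hTder : ∀ s ∈ Set.Ioo a b, HasDerivAt T (κ s • N s) s)
    (hNder : ∀ s ∈ Set.Ioo a b, HasDerivAt N ((-κ s) • T s + τ s • B s) s)
    (hBder : ∀ s ∈ Set.Ioo a b, HasDerivAt B ((-τ s) • N s) s)
    (h0 : (0:ℝ) ∈ Set.Ioo a b) (hτcont : ContinuousOn τ (Set.Ioo a b))
    (c : EuclideanSpace ℝ (Fin 3)) (R : ℝ) (hR : 0 < R)
    (hsph : ∀ s ∈ Set.Ioo a b, ‖γ s - c‖ = R) :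
    ∃ θ₀ : ℝ, ∀ s ∈ Set.Ioo a b,
      1 / κ s = R * Real.cos ((∫ t in (0:ℝ)..s, τ t) + θ₀) :=
  stmt_13_general a b γ T N B κ τ hγT hT1 hN1 hB1 hTN hTB hNB hκpos hTder hNder hBder h0 hτcont c R
    hsph
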